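/- Let C > 0, τ > 0, θ* > 0, and let K be a natural number. Suppose v : {0,1,…,K} → ℝ satisfies v(0) = θ*, v(k) > 0 for all k ≤ K, and (v(k) − v(k−1))/τ = −C·v(k)² for all 1 ≤ k ≤ K. Then v(k) ≤ v(k−1) for all 1 ≤ k ≤ K, and v(k) ≥ θ*/(1 + C·θ*·k·τ) for all 0 ≤ k ≤ K. -/
import Mathlib


/-- Scalar finite-difference comparison underlying the strict positivity of the discrete
temperature: if `v 0 = θ* > 0`, `v k > 0` for `k ≤ K`, and
`(v k - v (k-1))/τ = -C (v k)²` for `1 ≤ k ≤ K`, then `v` is nonincreasing and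
`v k ≥ θ*/(1 + C θ* k τ)` for all `k ≤ K`. -/
theorem discrete_temperature_lower_bound
    (C τ θs : ℝ) (hC : 0 < C) (hτ : 0 < τ) (hθs : 0 < θs) (K : ℕ)
    (v : ℕ → ℝ) (h0 : v 0 = θs) (hpos : ∀ k ≤ K, 0 < v k)
    (hrec : ∀ k, 1 ≤ k → k ≤ K → (v k - v (k - 1)) / τ = -C * (v k) ^ 2) :
    ∀ k ≤ K, (1 ≤ k → v k ≤ v (k - 1)) ∧ v k ≥ θs / (1 + C * θs * k * τ) := by
  have hmono : ∀ k, 1 ≤ k → k ≤ K → v k ≤ v (k - 1) := by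
    intro k hk1 hkK
    have h := hrec k hk1 hkK
    have heq : v k - v (k - 1) = -C * v k ^ 2 * τ := by
      field_simp at h; linarith
    nlinarith [sq_nonneg (v k), mul_pos hC hτ]
  have hinv : ∀ k, k ≤ K → 1 / v k ≤ 1 / θs + C * k * τ := by
    intro k
    induction k with
    | zero => intro _; simp [h0]
    | succ n ih =>
      intro hk
      have hnK : n ≤ K := Nat.le_of_succ_le hk
      have hn := ih hnK
      have hvk := hpos (n + 1) hk
      have hvn := hpos n hnK
      have h := hrec (n + 1) (by omega) hk
      simp only [Nat.add_sub_cancel] at h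
      have heq : v (n + 1) - v n = -C * v (n + 1) ^ 2 * τ := by
        field_simp at h; linarith
      have hle : v (n + 1) ≤ v n := by
        have := hmono (n + 1) (by omega) hk
        simpa using this
      have key : v n ≤ v (n + 1) + C * τ * (v (n + 1) * v n) := by nlinarith
      have hx1 : 1 / v n * v n = 1 := by field_simp
      have step : 1 / v (n + 1) ≤ 1 / v n + C * τ := by
        rw [div_le_iff₀ hvk]
        have hx : (0:ℝ) < 1 / v n := by positivity
        nlinarith [mul_le_mul_of_nonneg_left key hx.le]
      have : 1 / v (n + 1) ≤ 1 / θs + C * n * τ + C * τ := by linarith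
      push_cast
      linarith
  intro k hk
  refine ⟨fun h1 => hmono k h1 hk, ?_⟩
  have hvk := hpos k hk
  have hD : (0:ℝ) < 1 + C * θs * k * τ := by positivity
  have hik := hinv k hk
  rw [ge_iff_le, div_le_iff₀ hD]
  have hx1 : 1 / v k * v k = 1 := by field_simp
  have hy1 : 1 / θs * θs = 1 := by field_simp
  nlinarith [mul_le_mul_of_nonneg_left hik (mul_pos hvk hθs).le, hx1, hy1]
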